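/- One has lim_{τ→0⁺} √τ · exp( φ(q₁(τ),τ) + i·(2π·log τ + π)/τ^2 ) = −1; equivalently, e^{φ(q₁(τ),τ)} = −(1/√τ)·exp(i·(−2π log τ − π)/τ^2)·E(τ) with E(τ) → 1 as τ → 0⁺. -/

import Mathlib

open Real Complex Filter

noncomputable def Ppoly (τ : ℝ) (z : ℂ) : ℂ :=
  z ^ 3 + (Complex.I - 1 / (4 * (π : ℂ)) - Complex.I / (τ : ℂ) ^ 2) * z ^ 2
    - z / 4 - Complex.I / 4

noncomputable def phi (τ : ℝ) (z : ℂ) : ℂ :=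
  -(π : ℂ) * z - (π : ℂ) / (4 * z) +
    ((1 / 2 + 2 * (π : ℂ) * Complex.I / (τ : ℂ) ^ 2) / 2) *
      Complex.log (1 - Complex.I * z)

/-!
Write `1 - I q = τ⁻² (1 + u)`. Near the approximate root `q ≈ I/τ² + 1/(4π) - I` one has
`u = O(τ²)`, so `Log (1 - I q) = -2 log τ + Log (1 + u)` and `phi τ q` plus the phase equals
`π I - (log τ)/2 + R` with `R = -π/(4q) + Log (1 + u)/4 + (π I/τ²)(Log (1 + u) - u)`.
Since `‖q‖ ≍ τ⁻²` and `Log (1 + u) - u = O(u²) = O(τ⁴)`, `R = O(τ²)`, and exponentiating gives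
`√τ · exp (phi + phase) = -exp R → -1`.
-/

open scoped Topology

lemma Complex.norm_log_one_add_sub_self_le_sq {z : ℂ} (hz : ‖z‖ ≤ 1 / 2) :
    ‖log (1 + z) - z‖ ≤ ‖z‖ ^ 2 := by
  have h : (1 - ‖z‖)⁻¹ ≤ 2 := by
    rw [inv_le_comm₀ (by linarith) two_pos]
    linarith
  calc ‖log (1 + z) - z‖ ≤ ‖z‖ ^ 2 * (1 - ‖z‖)⁻¹ / 2 :=
        norm_log_one_add_sub_self_le (by linarith)
    _ ≤ ‖z‖ ^ 2 * 2 / 2 := by gcongr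
    _ = ‖z‖ ^ 2 := by ring

lemma Complex.log_eq_log_sq_mul_sub {τ : ℝ} (hτ : 0 < τ) {x : ℂ} (hx : x ≠ 0) :
    log x = log ((τ : ℂ) ^ 2 * x) - 2 * Real.log τ := by
  rw [← ofReal_pow, log_ofReal_mul (by positivity) hx, Real.log_pow]
  push_cast
  ring

lemma Complex.exp_ofReal_log_div_two {τ : ℝ} (hτ : 0 < τ) :
    exp ((Real.log τ : ℂ) / 2) = (√τ : ℝ) := by
  rw [← ofReal_ofNat, ← ofReal_div, ← ofReal_exp, ← Real.log_sqrt hτ.le,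
    Real.exp_log (Real.sqrt_pos.mpr hτ)]

noncomputable def approxRoot (τ : ℝ) : ℂ :=
  I / (τ : ℂ) ^ 2 + 1 / (4 * (π : ℂ)) - I

noncomputable def logArgDefect (τ : ℝ) (q : ℂ) : ℂ :=
  (τ : ℂ) ^ 2 * (1 - I * q) - 1

noncomputable def phiRemainder (τ : ℝ) (q : ℂ) : ℂ :=
  -π / (4 * q) + log (1 + logArgDefect τ q) / 4
    + π * I / (τ : ℂ) ^ 2 * (log (1 + logArgDefect τ q) - logArgDefect τ q)

section Estimates

variable {τ : ℝ} {q : ℂ}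

lemma phi_add_phase_eq (hτ : 0 < τ) (hq : 1 - I * q ≠ 0) :
    phi τ q + I * ((2 * π * (Real.log τ : ℂ) + π) / (τ : ℂ) ^ 2)
      = phiRemainder τ q + π * I - (Real.log τ : ℂ) / 2 := by
  have hτ2 : ((τ : ℂ) ^ 2)⁻¹ * (τ : ℂ) ^ 2 = 1 :=
    inv_mul_cancel₀ (pow_ne_zero 2 (ofReal_ne_zero.mpr hτ.ne'))
  rw [phi, log_eq_log_sq_mul_sub hτ hq, phiRemainder, logArgDefect, add_sub_cancel]
  linear_combination (π * I + π * q) * hτ2 - π * q * ((τ : ℂ) ^ 2)⁻¹ * (τ : ℂ) ^ 2 * I_sq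

lemma sqrt_mul_exp_phi_add_phase (hτ : 0 < τ) (hq : 1 - I * q ≠ 0) :
    ((√τ : ℝ) : ℂ) * cexp (phi τ q + I * ((2 * π * (Real.log τ : ℂ) + π) / (τ : ℂ) ^ 2))
      = -cexp (phiRemainder τ q) := by
  have hsqrt : ((√τ : ℝ) : ℂ) ≠ 0 := ofReal_ne_zero.mpr (Real.sqrt_pos.mpr hτ).ne'
  rw [phi_add_phase_eq hτ hq, Complex.exp_sub, Complex.exp_add, exp_pi_mul_I, exp_ofReal_log_div_two hτ]
  field_simp

lemma norm_logArgDefect_le (hτ : 0 < τ) (hτ' : τ ≤ 1 / 4)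
    (hq : ‖q - approxRoot τ‖ ≤ τ ^ 2 / 2) : ‖logArgDefect τ q‖ ≤ τ ^ 2 / 8 := by
  have hτ2 : ((τ : ℂ) ^ 2)⁻¹ * (τ : ℂ) ^ 2 = 1 :=
    inv_mul_cancel₀ (pow_ne_zero 2 (ofReal_ne_zero.mpr hτ.ne'))
  have hπ : ‖(1 : ℂ) / (4 * π)‖ ≤ 1 / 12 := by
    rw [norm_div, norm_one, norm_mul, Complex.norm_ofNat, norm_real, Real.norm_of_nonneg pi_pos.le]
    gcongr
    linarith [pi_gt_three]
  have heq : logArgDefect τ q = -I * (τ : ℂ) ^ 2 * (1 / (4 * π) + (q - approxRoot τ)) := by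
    rw [logArgDefect, approxRoot]
    linear_combination ((τ : ℂ) ^ 2 - 1) * I_sq - I ^ 2 * hτ2
  calc ‖logArgDefect τ q‖ = τ ^ 2 * ‖1 / (4 * π) + (q - approxRoot τ)‖ := by
        rw [heq, norm_mul, norm_mul, norm_neg, norm_I, one_mul, norm_pow, norm_real,
          Real.norm_of_nonneg hτ.le]
    _ ≤ τ ^ 2 * (1 / 12 + τ ^ 2 / 2) := by gcongr; exact (norm_add_le _ _).trans (by gcongr)
    _ ≤ τ ^ 2 / 8 := by nlinarith [mul_nonneg (sq_nonneg τ) (sub_nonneg.2 (pow_le_pow_left₀ hτ.le hτ' 2))]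

lemma one_half_le_sq_mul_norm (hτ : 0 < τ) (hτ' : τ ≤ 1 / 4)
    (hq : ‖q - approxRoot τ‖ ≤ τ ^ 2 / 2) : 1 / 2 ≤ τ ^ 2 * ‖q‖ := by
  have hu := norm_logArgDefect_le hτ hτ' hq
  have heq : (τ : ℂ) ^ 2 * (I * q) = (τ : ℂ) ^ 2 - 1 - logArgDefect τ q := by
    rw [logArgDefect]; ring
  have hnorm : ‖(τ : ℂ) ^ 2 * (I * q)‖ = τ ^ 2 * ‖q‖ := by
    rw [norm_mul, norm_mul, norm_I, one_mul, norm_pow, norm_real, Real.norm_of_nonneg hτ.le]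
  have hτ2 : ‖(τ : ℂ) ^ 2‖ = τ ^ 2 := by
    rw [norm_pow, norm_real, Real.norm_of_nonneg hτ.le]
  have htri : (1 : ℝ) ≤ τ ^ 2 + ‖logArgDefect τ q‖ + τ ^ 2 * ‖q‖ := by
    calc (1 : ℝ) = ‖(τ : ℂ) ^ 2 - logArgDefect τ q - (τ : ℂ) ^ 2 * (I * q)‖ := by
          rw [heq]; simp
      _ ≤ ‖(τ : ℂ) ^ 2‖ + ‖logArgDefect τ q‖ + ‖(τ : ℂ) ^ 2 * (I * q)‖ :=
          (norm_sub_le _ _).trans (by gcongr; exact norm_sub_le _ _)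
      _ = _ := by rw [hτ2, hnorm]
  nlinarith [pow_le_pow_left₀ hτ.le hτ' 2]

lemma one_sub_I_mul_ne_zero (hτ : 0 < τ) (hτ' : τ ≤ 1 / 4)
    (hq : ‖q - approxRoot τ‖ ≤ τ ^ 2 / 2) : 1 - I * q ≠ 0 := by
  intro h
  have hu : logArgDefect τ q = -1 := by rw [logArgDefect, h, mul_zero, zero_sub]
  have := norm_logArgDefect_le hτ hτ' hq
  rw [hu, norm_neg, norm_one] at this
  nlinarith [pow_le_pow_left₀ hτ.le hτ' 2]

lemma norm_phiRemainder_le (hτ : 0 < τ) (hτ' : τ ≤ 1 / 4)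
    (hq : ‖q - approxRoot τ‖ ≤ τ ^ 2 / 2) : ‖phiRemainder τ q‖ ≤ 4 * τ ^ 2 := by
  set u := logArgDefect τ q
  have hτ2 : 0 < τ ^ 2 := by positivity
  have hu : ‖u‖ ≤ τ ^ 2 / 8 := norm_logArgDefect_le hτ hτ' hq
  have hu_half : ‖u‖ ≤ 1 / 2 := hu.trans (by nlinarith [pow_le_pow_left₀ hτ.le hτ' 2])
  have hq0 := one_half_le_sq_mul_norm hτ hτ' hq
  have hqpos : 0 < ‖q‖ := pos_of_mul_pos_right (by linarith) hτ2.le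
  have h₁ : ‖-(π : ℂ) / (4 * q)‖ ≤ 2 * τ ^ 2 := by
    rw [norm_div, norm_neg, norm_mul, Complex.norm_ofNat, norm_real,
      Real.norm_of_nonneg pi_pos.le, div_le_iff₀ (by positivity)]
    nlinarith [pi_lt_four]
  have h₂ : ‖log (1 + u) / 4‖ ≤ τ ^ 2 := by
    rw [norm_div, Complex.norm_ofNat]
    linarith [norm_log_one_add_half_le_self hu_half]
  have h₃ : ‖π * I / (τ : ℂ) ^ 2 * (log (1 + u) - u)‖ ≤ τ ^ 2 := by
    rw [norm_mul, norm_div, norm_mul, norm_real, Real.norm_of_nonneg pi_pos.le, norm_I, mul_one,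
      norm_pow, norm_real, Real.norm_of_nonneg hτ.le]
    calc π / τ ^ 2 * ‖log (1 + u) - u‖ ≤ π / τ ^ 2 * (τ ^ 2 / 8) ^ 2 := by
          gcongr
          exact (norm_log_one_add_sub_self_le_sq hu_half).trans (by gcongr)
      _ = π / 64 * τ ^ 2 := by field_simp; ring
      _ ≤ τ ^ 2 := by nlinarith [pi_lt_four]
  calc ‖phiRemainder τ q‖
      ≤ ‖-(π : ℂ) / (4 * q)‖ + ‖log (1 + u) / 4‖ + ‖π * I / (τ : ℂ) ^ 2 * (log (1 + u) - u)‖ :=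
        norm_add₃_le
    _ ≤ 4 * τ ^ 2 := by linarith

end Estimates

lemma tendsto_phiRemainder {q : ℝ → ℂ}
    (hq : ∀ τ : ℝ, 0 < τ → τ ≤ 1 / 4 → ‖q τ - approxRoot τ‖ ≤ τ ^ 2 / 2) :
    Tendsto (fun τ => phiRemainder τ (q τ)) (𝓝[>] 0) (𝓝 0) := by
  have hbound : ∀ᶠ τ in 𝓝[>] (0 : ℝ), ‖phiRemainder τ (q τ)‖ ≤ 4 * τ ^ 2 := by
    filter_upwards [Ioc_mem_nhdsGT (by norm_num : (0 : ℝ) < 1 / 4)] with τ ⟨hτ, hτ'⟩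
    exact norm_phiRemainder_le hτ hτ' (hq τ hτ hτ')
  have hlim : Tendsto (fun τ : ℝ => 4 * τ ^ 2) (𝓝[>] 0) (𝓝 0) := by
    have h := (by fun_prop : Continuous fun τ : ℝ => 4 * τ ^ 2).tendsto 0
    simpa using h.mono_left nhdsWithin_le_nhds
  exact squeeze_zero_norm' hbound hlim

theorem statement12 (q₁ : ℝ → ℂ)
    (hq₁ : ∀ τ : ℝ, 0 < τ → τ ≤ 1 / 4 →
      ‖q₁ τ - (Complex.I / (τ : ℂ) ^ 2 + 1 / (4 * (π : ℂ)) - Complex.I)‖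
          ≤ τ ^ 2 / 2 ∧ Ppoly τ (q₁ τ) = 0) :
    Tendsto
      (fun τ : ℝ => ((Real.sqrt τ : ℝ) : ℂ) *
        Complex.exp (phi τ (q₁ τ) +
          Complex.I * ((2 * (π : ℂ) * (Real.log τ : ℂ) + (π : ℂ)) / (τ : ℂ) ^ 2)))
      (nhdsWithin 0 (Set.Ioi 0)) (nhds (-1)) := by
  have hq : ∀ τ : ℝ, 0 < τ → τ ≤ 1 / 4 → ‖q₁ τ - approxRoot τ‖ ≤ τ ^ 2 / 2 :=
    fun τ hτ hτ' => (hq₁ τ hτ hτ').1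
  have hlim : Tendsto (fun τ => -cexp (phiRemainder τ (q₁ τ))) (𝓝[>] 0) (𝓝 (-1)) := by
    simpa using (tendsto_phiRemainder hq).cexp.neg
  refine hlim.congr' ?_
  filter_upwards [Ioc_mem_nhdsGT (by norm_num : (0 : ℝ) < 1 / 4)] with τ ⟨hτ, hτ'⟩
  exact (sqrt_mul_exp_phi_add_phase hτ (one_sub_I_mul_ne_zero hτ hτ' (hq τ hτ hτ'))).symm
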